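/- arXiv:math/9703211 — 2 statements merged into one kernel-verified Lean document; each statement's English description precedes it below -/
import Mathlib

section
/- An elementary boundary trail that uses exactly one lake label uses at most two bridge labels, and each of its bridge labels contains the unique island not belonging to that lake. -/
/-- An elementary boundary trail on the four islands `Fin 4`: a nonempty cyclic
sequence of `n + 1` steps.  Step `i` goes from island `src i` to island
`src (i + 1)` (indices cyclic, via `Fin (n+1)` addition) and carries a label
`label i`, which is a bridge (a 2-element subset of `Fin 4`) when
`isBridge i = true` and a lake (a 3-element subset of `Fin 4`) when
`isBridge i = false`.  Each step joins two distinct islands of its label,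
distinct steps carry distinct labels, and no bridge label occurring in the
trail is contained in a lake label occurring in the trail. -/
structure ElemBoundaryTrail where
  /-- the trail has `n + 1` steps -/
  n : ℕ
  /-- the island at which step `i` starts (step `i` ends at `src (i + 1)`) -/
  src : Fin (n + 1) → Fin 4
  /-- whether step `i` is labeled by a bridge (`true`) or by a lake (`false`) -/
  isBridge : Fin (n + 1) → Bool
  /-- the label of step `i`, a subset of the islands -/
  label : Fin (n + 1) → Finset (Fin 4)
  /-- a bridge is a 2-element subset of the islands -/
  bridge_card : ∀ i, isBridge i = true → (label i).card = 2
  /-- a lake is a 3-element subset of the islands -/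
  lake_card : ∀ i, isBridge i = false → (label i).card = 3
  /-- each step starts at an island of its label -/
  src_mem : ∀ i, src i ∈ label i
  /-- each step ends at an island of its label -/
  dst_mem : ∀ i, src (i + 1) ∈ label i
  /-- each step joins two distinct islands -/
  step_ne : ∀ i, src i ≠ src (i + 1)
  /-- distinct steps carry distinct labels -/
  label_injective : Function.Injective label
  /-- no bridge label of the trail is contained in a lake label of the trail -/
  no_bridge_in_lake : ∀ i j, isBridge i = true → isBridge j = false →
    ¬ label i ⊆ label j

/-- The number of bridges crossed by the trail (each at most once, since
labels are distinct). -/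
def ElemBoundaryTrail.bridgeCount (T : ElemBoundaryTrail) : ℕ :=
  (Finset.univ.filter fun i => T.isBridge i = true).card

/-- The number of lakes crossed by the trail (each at most once, since
labels are distinct). -/
def ElemBoundaryTrail.lakeCount (T : ElemBoundaryTrail) : ℕ :=
  (Finset.univ.filter fun i => T.isBridge i = false).card

/-!
The lake `L` misses exactly one island `p`, and a bridge avoiding `p` would lie inside `L`, so every
bridge contains `p`; conversely the only lake does not. Thus the bridge steps are exactly the steps
that leave or enter `p`, and since the trail is closed it leaves `p` as often as it enters it: the
number of bridges is even. Injectivity of the labels bounds it by the three pairs of islands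
containing `p`, hence by `2`.
-/

open Finset

theorem Fin.card_filter_add_one {n : ℕ} (P : Fin (n + 1) → Prop) [DecidablePred P] :
    #{i | P (i + 1)} = #{i | P i} :=
  card_equiv (Equiv.addRight 1) (by simp)

theorem Fin.card_pairs_mem (p : Fin 4) : #{s : Finset (Fin 4) | s.card = 2 ∧ p ∈ s} = 3 := by
  revert p
  decide

namespace ElemBoundaryTrail

variable (T : ElemBoundaryTrail)

theorem exists_unique_lake (h : T.lakeCount = 1) :
    ∃ j, T.isBridge j = false ∧ ∀ k, T.isBridge k = false → k = j := by
  obtain ⟨j, hj⟩ := card_eq_one.mp h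
  exact ⟨j, by simpa using eq_singleton_iff_unique_mem.mp hj⟩

theorem label_eq_pair {i} (hi : T.isBridge i = true) : T.label i = {T.src i, T.src (i + 1)} :=
  (eq_of_subset_of_card_le (by simp [insert_subset_iff, T.src_mem, T.dst_mem])
    (by simp [T.bridge_card i hi, card_pair (T.step_ne i)])).symm

theorem exists_compl_label_eq {j} (hj : T.isBridge j = false) : ∃ p, (T.label j)ᶜ = {p} :=
  card_eq_one.mp (by simp [card_compl, T.lake_card j hj])

theorem compl_label_subset_label {i j} (hi : T.isBridge i = true) (hj : T.isBridge j = false) :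
    (T.label j)ᶜ ⊆ T.label i := by
  obtain ⟨p, hp⟩ := T.exists_compl_label_eq hj
  obtain ⟨x, hxi, hxj⟩ := not_subset.mp (T.no_bridge_in_lake i j hi hj)
  have hx : x = p := mem_singleton.mp (hp ▸ mem_compl.mpr hxj)
  simpa [hp, ← hx] using hxi

theorem bridgeCount_le_three {p} (hp : ∀ i, T.isBridge i = true → p ∈ T.label i) :
    T.bridgeCount ≤ 3 := by
  rw [bridgeCount, ← Fin.card_pairs_mem p]
  refine card_le_card_of_injOn T.label (fun i hi => ?_) T.label_injective.injOn
  simp only [mem_coe, mem_filter, mem_univ, true_and] at hi ⊢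
  exact ⟨T.bridge_card i hi, hp i hi⟩

theorem bridgeCount_eq_two_mul {p} (hp : ∀ i, p ∈ T.label i ↔ T.isBridge i = true) :
    T.bridgeCount = 2 * #{i | T.src i = p} := by
  have hsteps : univ.filter (T.isBridge · = true) =
      univ.filter (T.src · = p) ∪ univ.filter fun i => T.src (i + 1) = p := by
    ext i
    simp only [mem_filter, mem_univ, true_and, mem_union]
    constructor
    · intro hi
      simpa [T.label_eq_pair hi, eq_comm] using (hp i).mpr hi
    · rintro (hsrc | hdst)
      · exact (hp i).mp (hsrc ▸ T.src_mem i)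
      · exact (hp i).mp (hdst ▸ T.dst_mem i)
  have hdisj : Disjoint (univ.filter (T.src · = p)) (univ.filter fun i => T.src (i + 1) = p) :=
    disjoint_filter.mpr fun i _ hsrc hdst => T.step_ne i (hsrc.trans hdst.symm)
  rw [bridgeCount, hsteps, card_union_of_disjoint hdisj,
    Fin.card_filter_add_one (fun i => T.src i = p), two_mul]

end ElemBoundaryTrail

/-- An elementary boundary trail that uses exactly one lake label uses at most
two bridge labels, and each of its bridge labels contains the unique island
not belonging to that lake (i.e. the complement of the lake, a single island,
is contained in every bridge label of the trail). -/
theorem elemBoundaryTrail_one_lake (T : ElemBoundaryTrail)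
    (h : T.lakeCount = 1) :
    T.bridgeCount ≤ 2 ∧
      ∀ i j, T.isBridge i = true → T.isBridge j = false →
        (T.label j)ᶜ ⊆ T.label i := by
  obtain ⟨j, hj, hlake_unique⟩ := T.exists_unique_lake h
  obtain ⟨p, hp⟩ := T.exists_compl_label_eq hj
  have hpj : p ∈ (T.label j)ᶜ := by simp [hp]
  have hbridge_iff : ∀ i, p ∈ T.label i ↔ T.isBridge i = true := by
    refine fun i => ⟨fun hpi => ?_, fun hi => T.compl_label_subset_label hi hj hpj⟩
    by_contra hi
    obtain rfl := hlake_unique i (by simpa using hi)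
    exact mem_compl.mp hpj hpi
  have heven := T.bridgeCount_eq_two_mul hbridge_iff
  have hle := T.bridgeCount_le_three fun i => (hbridge_iff i).mpr
  exact ⟨by omega, fun i k hi hk => T.compl_label_subset_label hi hk⟩
end

section
/- If an elementary boundary trail uses n distinct lake labels with n ≥ 2, then it uses at most one bridge label when n = 2 and no bridge label when n ≥ 3. -/
/-!
A lake omits exactly one of the four islands, and a bridge not contained in that lake must
contain the omitted island. Distinct lakes omit distinct islands, so every bridge of the trail
contains as many islands as there are lakes. A bridge has only two islands: with three or more
lakes there is no bridge, and with two lakes every bridge is the pair of omitted islands, so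
there is at most one.
-/

open Finset

namespace Finset

theorem disjoint_of_card_eq_one {α : Type*} {s t : Finset α} (hs : #s = 1) (ht : #t = 1)
    (hst : s ≠ t) : Disjoint s t := by
  obtain ⟨a, rfl⟩ := card_eq_one.mp hs
  obtain ⟨b, rfl⟩ := card_eq_one.mp ht
  rw [disjoint_singleton]
  rintro rfl
  exact hst rfl

variable {α : Type*} [Fintype α] [DecidableEq α]

theorem card_compl_eq_one_of_card_add_one {s : Finset α} (h : #s + 1 = Fintype.card α) :
    #sᶜ = 1 := by
  rw [card_compl]
  omega

theorem compl_subset_of_not_subset_of_card_compl_eq_one {s t : Finset α} (ht : #tᶜ = 1)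
    (h : ¬s ⊆ t) : tᶜ ⊆ s := by
  obtain ⟨x, hx⟩ := card_eq_one.mp ht
  obtain ⟨y, hys, hyt⟩ := not_subset.mp h
  have hy : y ∈ tᶜ := mem_compl.mpr hyt
  rw [hx, mem_singleton] at hy
  rw [hx, singleton_subset_iff, ← hy]
  exact hys

end Finset

namespace ElemBoundaryTrail

variable (T : ElemBoundaryTrail)

def missingIslands : Finset (Fin 4) :=
  (univ.filter fun j => T.isBridge j = false).biUnion fun j => (T.label j)ᶜ

theorem card_compl_label_of_lake {j : Fin (T.n + 1)} (hj : T.isBridge j = false) :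
    #(T.label j)ᶜ = 1 :=
  card_compl_eq_one_of_card_add_one (by rw [T.lake_card j hj]; rfl)

theorem card_missingIslands : #T.missingIslands = T.lakeCount := by
  rw [missingIslands, card_biUnion, lakeCount, card_eq_sum_ones]
  · exact sum_congr rfl fun j hj => T.card_compl_label_of_lake (mem_filter.mp hj).2
  · intro j hj j' hj' hne
    refine disjoint_of_card_eq_one (T.card_compl_label_of_lake (mem_filter.mp hj).2)
      (T.card_compl_label_of_lake (mem_filter.mp hj').2) fun h => hne ?_
    exact T.label_injective (compl_injective h)

theorem missingIslands_subset_label {i : Fin (T.n + 1)} (hi : T.isBridge i = true) :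
    T.missingIslands ⊆ T.label i := by
  refine biUnion_subset.mpr fun j hj => ?_
  have hj : T.isBridge j = false := (mem_filter.mp hj).2
  exact compl_subset_of_not_subset_of_card_compl_eq_one (T.card_compl_label_of_lake hj)
    (T.no_bridge_in_lake i j hi hj)

theorem lakeCount_le_two_of_bridge {i : Fin (T.n + 1)} (hi : T.isBridge i = true) :
    T.lakeCount ≤ 2 := by
  rw [← T.card_missingIslands, ← T.bridge_card i hi]
  exact card_le_card (T.missingIslands_subset_label hi)

theorem label_eq_missingIslands_of_lakeCount_eq_two (h : T.lakeCount = 2)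
    {i : Fin (T.n + 1)} (hi : T.isBridge i = true) : T.label i = T.missingIslands :=
  (eq_of_subset_of_card_le (T.missingIslands_subset_label hi)
    (by rw [T.bridge_card i hi, T.card_missingIslands, h])).symm

theorem bridgeCount_le_one_of_lakeCount_eq_two (h : T.lakeCount = 2) : T.bridgeCount ≤ 1 := by
  refine card_le_one.mpr fun i hi i' hi' => T.label_injective ?_
  rw [T.label_eq_missingIslands_of_lakeCount_eq_two h (mem_filter.mp hi).2,
    T.label_eq_missingIslands_of_lakeCount_eq_two h (mem_filter.mp hi').2]

theorem bridgeCount_eq_zero_of_three_le_lakeCount (h : 3 ≤ T.lakeCount) : T.bridgeCount = 0 :=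
  card_eq_zero.mpr <| filter_eq_empty_iff.mpr fun i _ hi => by
    have := T.lakeCount_le_two_of_bridge hi
    omega

end ElemBoundaryTrail

theorem elemBoundaryTrail_many_lakes_general (T : ElemBoundaryTrail) (n : ℕ)
    (hn : T.lakeCount = n) :
    (n = 2 → T.bridgeCount ≤ 1) ∧ (3 ≤ n → T.bridgeCount = 0) := by
  subst hn
  exact ⟨T.bridgeCount_le_one_of_lakeCount_eq_two, T.bridgeCount_eq_zero_of_three_le_lakeCount⟩

/-- If an elementary boundary trail uses `n` distinct lake labels with `n ≥ 2`,
then it uses at most one bridge label when `n = 2` and no bridge label when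
`n ≥ 3`. -/
theorem elemBoundaryTrail_many_lakes (T : ElemBoundaryTrail) (n : ℕ)
    (hn : T.lakeCount = n) (h2 : 2 ≤ n) :
    (n = 2 → T.bridgeCount ≤ 1) ∧ (3 ≤ n → T.bridgeCount = 0) :=
  elemBoundaryTrail_many_lakes_general T n hn
end
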